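/- Let W be a Coxeter group with Demazure product ∗. If v = v′s with s a simple reflection and v′ < v in Bruhat order, then for all w ∈ W, v ∗ w = v′ ∗ (s ∗ w). -/

import Mathlib

/-!
Since `s ∗ w` is `s * w` when `ℓ (s * w) > ℓ w` and `w` otherwise, both inequalities between
`v ∗ w` and `v′ ∗ (s ∗ w)` come down to splitting an element below `v′ * s` as `x ≤ v′` or
`x = x′ * s` with `x′ ≤ v′` (and likewise on the left for `s * w`). This needs the subword
property for the particular reduced word `l ++ [s]` of `v′ * s`, whereas `BruhatLE` only provides
some reduced word. The subword property for every word follows from the strong exchange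
condition, by induction along a reduced word. Strong exchange in turn comes
from the action of `W` on `W × ℤˣ` in which `s` sends `(t, ε)` to `(s t s, ±ε)`, the sign
flipping when `t = s`: the sign picked up by `(t, 1)` along a word is the parity of the number of
occurrences of `t` in its right inversion sequence, and it is `-1` exactly when `t` is a right
inversion.
-/

open CoxeterSystem

variable {B W : Type*} [Group W] {M : CoxeterMatrix B}

/-- The Bruhat order on a Coxeter group, via the subword property:
`u ≤ w` iff some reduced word for `w` has a subword whose product is `u`. -/
def BruhatLE (cs : CoxeterSystem M W) (u w : W) : Prop :=
  ∃ l : List B, cs.IsReduced l ∧ cs.wordProd l = w ∧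
    ∃ l' : List B, List.Sublist l' l ∧ cs.wordProd l' = u

/-- `m` is the Demazure product `v ∗ w`: the Bruhat-maximal element of
`{x * q : x ≤ v, q ≤ w}`. -/
def IsDemazureProd (cs : CoxeterSystem M W) (v w m : W) : Prop :=
  (∃ x q : W, BruhatLE cs x v ∧ BruhatLE cs q w ∧ m = x * q) ∧
  (∀ x q : W, BruhatLE cs x v → BruhatLE cs q w → BruhatLE cs (x * q) m)

namespace CoxeterSystem

open List

variable (cs : CoxeterSystem M W)

local prefix:100 "s " => cs.simple
local prefix:100 "π " => cs.wordProd
local prefix:100 "ℓ " => cs.length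
local prefix:100 "ris " => cs.rightInvSeq
local prefix:100 "lis " => cs.leftInvSeq

theorem alternatingWord_two_mul_succ (i j : B) (p : ℕ) :
    alternatingWord i j (2 * (p + 1)) = i :: j :: alternatingWord i j (2 * p) := by
  rw [show 2 * (p + 1) = 2 * p + 1 + 1 by ring, alternatingWord_succ', alternatingWord_succ']
  simp

theorem reverse_alternatingWord_two_mul (i j : B) (p : ℕ) :
    (alternatingWord i j (2 * p)).reverse = alternatingWord j i (2 * p) := by
  induction p with
  | zero => rfl
  | succ p ih =>
    rw [alternatingWord_two_mul_succ, show 2 * (p + 1) = 2 * p + 1 + 1 by ring,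
      alternatingWord_succ, alternatingWord_succ, reverse_cons, reverse_cons, ih]
    simp

theorem prod_map_alternatingWord_two_mul {G : Type*} [Monoid G] (f : B → G) (i j : B) (p : ℕ) :
    ((alternatingWord i j (2 * p)).map f).prod = (f i * f j) ^ p := by
  induction p with
  | zero => simp [alternatingWord]
  | succ p ih => rw [alternatingWord_two_mul_succ, map_cons, map_cons, prod_cons, prod_cons, ih,
      pow_succ', mul_assoc]

theorem wordProd_alternatingWord_two_mul_eq_one (i j : B) :
    π (alternatingWord i j (2 * M i j)) = 1 :=
  (prod_map_alternatingWord_two_mul _ i j _).trans (cs.simple_mul_simple_pow i j)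

open Classical in
theorem even_count_rightInvSeq_alternatingWord (i j : B) (t : W) :
    Even ((ris (alternatingWord i j (2 * M i j))).count t) := by
  rw [← reverse_alternatingWord_two_mul j i, rightInvSeq_reverse, count_reverse]
  set m := M i j
  set L := lis (alternatingWord j i (2 * m))
  have hL : L.length = 2 * m := by simp [L]
  have hperiod : L.drop m = L.take m := by
    apply ext_getElem (by simp [hL]; omega)
    intro k h₁ h₂
    have hk : k < m := by simp [hL] at h₂; omega
    simp only [getElem_drop, getElem_take, L]
    rw [getElem_leftInvSeq_alternatingWord _ _ _ _ _ (by omega),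
      getElem_leftInvSeq_alternatingWord _ _ _ _ _ (by omega),
      prod_alternatingWord_eq_mul_pow, prod_alternatingWord_eq_mul_pow,
      show (2 * (m + k) + 1) / 2 = m + k by omega, show (2 * k + 1) / 2 = k by omega,
      pow_add, cs.simple_mul_simple_pow, one_mul]
    simp
  rw [← take_append_drop m L, count_append, hperiod]
  exact Even.add_self _

noncomputable section ReflectionRepresentation

open Classical

def signedConj (i : B) : Equiv.Perm (W × ℤˣ) :=
  Function.Involutive.toPerm (fun p => (s i * p.1 * s i, if p.1 = s i then -p.2 else p.2))
    (by rintro ⟨t, ε⟩; by_cases h : t = s i <;> simp [h, mul_assoc, mul_eq_one_iff_eq_inv])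

theorem signedConj_apply (i : B) (t : W) (ε : ℤˣ) :
    cs.signedConj i (t, ε) = (s i * t * s i, if t = s i then -ε else ε) := rfl

theorem prod_map_signedConj_apply (ω : List B) (t : W) (ε : ℤˣ) :
    (ω.map cs.signedConj).prod (t, ε) =
      (π ω * t * (π ω)⁻¹, (-1) ^ (ris ω).count t * ε) := by
  induction ω with
  | nil => simp
  | cons i ω ih =>
    have hconj : π ω * t * (π ω)⁻¹ = s i ↔ (π ω)⁻¹ * s i * π ω = t := by
      constructor <;> intro h <;> rw [← h] <;> group
    rw [map_cons, prod_cons, Equiv.Perm.mul_apply, ih, signedConj_apply]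
    simp only [rightInvSeq, count_cons, hconj, beq_iff_eq, wordProd_cons, mul_inv_rev, inv_simple]
    split_ifs <;> simp [pow_succ, mul_assoc]

theorem isLiftable_signedConj : M.IsLiftable cs.signedConj := by
  intro i j
  ext ⟨t, ε⟩ : 1
  rw [← prod_map_alternatingWord_two_mul, prod_map_signedConj_apply,
    wordProd_alternatingWord_two_mul_eq_one,
    (even_count_rightInvSeq_alternatingWord cs i j t).neg_one_pow]
  simp

def reflRep : W →* Equiv.Perm (W × ℤˣ) := cs.lift ⟨cs.signedConj, cs.isLiftable_signedConj⟩

theorem reflRep_wordProd_apply (ω : List B) (t : W) (ε : ℤˣ) :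
    cs.reflRep (π ω) (t, ε) = (π ω * t * (π ω)⁻¹, (-1) ^ (ris ω).count t * ε) := by
  rw [← prod_map_signedConj_apply, wordProd, map_list_prod, map_map]
  congr 3
  ext1 i
  exact cs.lift_apply_simple cs.isLiftable_signedConj i

def invSign (w t : W) : ℤˣ := (cs.reflRep w (t, 1)).2

theorem invSign_wordProd (ω : List B) (t : W) : cs.invSign (π ω) t = (-1) ^ (ris ω).count t := by
  simp [invSign, reflRep_wordProd_apply]

theorem reflRep_apply (w t : W) (ε : ℤˣ) :
    cs.reflRep w (t, ε) = (w * t * w⁻¹, cs.invSign w t * ε) := by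
  obtain ⟨ω, rfl⟩ := cs.wordProd_surjective w
  rw [reflRep_wordProd_apply, invSign_wordProd]

theorem invSign_mul (a b t : W) :
    cs.invSign (a * b) t = cs.invSign a (b * t * b⁻¹) * cs.invSign b t := by
  show (cs.reflRep (a * b) (t, 1)).2 = _
  rw [map_mul, Equiv.Perm.mul_apply, reflRep_apply cs b, reflRep_apply cs a, mul_one]

theorem invSign_one (t : W) : cs.invSign 1 t = 1 := by simp [invSign]

theorem invSign_simple_simple (i : B) : cs.invSign (s i) (s i) = -1 := by
  simp [invSign, reflRep, signedConj_apply]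

theorem invSign_self {t : W} (ht : cs.IsReflection t) : cs.invSign t t = -1 := by
  obtain ⟨w, i, rfl⟩ := ht
  have hinv := cs.invSign_mul w w⁻¹ (w * s i * w⁻¹)
  rw [mul_inv_cancel, invSign_one] at hinv
  have hconj : w⁻¹ * (w * s i * w⁻¹) * w⁻¹⁻¹ = s i := by group
  rw [hconj] at hinv
  rw [cs.invSign_mul (w * s i) w⁻¹, hconj, cs.invSign_mul w (s i),
    show s i * s i * (s i)⁻¹ = s i by group, invSign_simple_simple, mul_right_comm, ← hinv, one_mul]

theorem mem_rightInvSeq_of_invSign_eq_neg_one {ω : List B} {t : W}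
    (h : cs.invSign (π ω) t = -1) : t ∈ ris ω := by
  rw [← count_pos_iff, Nat.pos_iff_ne_zero]
  intro h0
  rw [invSign_wordProd, h0, pow_zero] at h
  exact absurd h (by decide)

theorem invSign_eq_neg_one_of_isRightInversion {w t : W} (h : cs.IsRightInversion w t) :
    cs.invSign w t = -1 := by
  -- otherwise `t` would also be a right inversion of `w * t`
  rcases Int.units_eq_one_or (cs.invSign w t) with h1 | h1
  · obtain ⟨ω, hω, hwt⟩ := cs.exists_isReduced (w * t)
    have hsign : cs.invSign (π ω) t = -1 := by
      rw [← hwt, invSign_mul, invSign_self cs h.1, show t * t * t⁻¹ = t by group, h1, one_mul]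
    have hlt := (cs.isRightInversion_of_mem_rightInvSeq hω
      (cs.mem_rightInvSeq_of_invSign_eq_neg_one hsign)).2
    rw [← hwt, mul_assoc, h.1.mul_self, mul_one] at hlt
    exact (lt_asymm h.2 hlt).elim
  · exact h1

theorem mem_rightInvSeq_of_isRightInversion {ω : List B} {t : W}
    (h : cs.IsRightInversion (π ω) t) : t ∈ ris ω :=
  cs.mem_rightInvSeq_of_invSign_eq_neg_one (cs.invSign_eq_neg_one_of_isRightInversion h)

end ReflectionRepresentation

theorem rightInvSeq_append (ω ω' : List B) :
    ris (ω ++ ω') = (ris ω).map (fun x => (π ω')⁻¹ * x * π ω') ++ ris ω' := by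
  induction ω with
  | nil => simp
  | cons i ω ih =>
    rw [cons_append, rightInvSeq, ih, rightInvSeq, map_cons, cons_append, wordProd_append]
    congr 1
    group

theorem exists_sublist_wordProd_eq_mul_of_mem_rightInvSeq {ω : List B} {t : W}
    (ht : t ∈ ris ω) : ∃ χ, χ <+ ω ∧ π χ = π ω * t := by
  obtain ⟨k, hk, rfl⟩ := getElem_of_mem ht
  refine ⟨ω.eraseIdx k, eraseIdx_sublist _ _, ?_⟩
  rw [← getD_eq_getElem _ 1 hk, wordProd_mul_getD_rightInvSeq]

theorem exists_sublist_wordProd_eq_mul_of_isRightInversion {ω : List B} {t : W}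
    (h : cs.IsRightInversion (π ω) t) : ∃ χ, χ <+ ω ∧ π χ = π ω * t :=
  cs.exists_sublist_wordProd_eq_mul_of_mem_rightInvSeq (cs.mem_rightInvSeq_of_isRightInversion h)

/-- Induction on `a` from the right. Deleting the last letter `c` of `a` multiplies by the
reflection `t = (π b)⁻¹ * s c * π b`; when this lowers the length, strong exchange trades the
deletion of `c` for a deletion inside `a₁` (not inside `b`, as `c :: b` is reduced). -/
theorem exists_sublist_wordProd_eq_of_sublist {a b a' ω : List B}
    (hred : cs.IsReduced (a ++ b)) (ha' : a' <+ a) (hω : π ω = π (a ++ b)) :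
    ∃ χ, χ <+ ω ∧ π χ = π (a' ++ b) := by
  induction a using List.reverseRecOn generalizing b a' with
  | nil => exact ⟨ω, Sublist.refl ω, by rw [hω, sublist_nil.mp ha']⟩
  | append_singleton a c ih =>
    rw [append_assoc, singleton_append] at hred hω
    obtain ⟨a₁, a₂, rfl, h₁, h₂⟩ := sublist_append_iff.mp ha'
    rcases sublist_singleton.mp h₂ with rfl | rfl
    · set t := (π b)⁻¹ * s c * π b
      have ht : cs.IsReflection t := ⟨(π b)⁻¹, c, by simp [t]⟩
      have hut : π (a₁ ++ b) * t = π (a₁ ++ c :: b) := by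
        simp only [t, wordProd_append, wordProd_cons]
        group
      rw [append_nil]
      rcases Nat.lt_or_gt_of_ne (ht.length_mul_left_ne (π (a₁ ++ b))) with hdown | hup
      · have hmem := cs.mem_rightInvSeq_of_isRightInversion ⟨ht, hdown⟩
        rw [rightInvSeq_append, mem_append, mem_map] at hmem
        rcases hmem with ⟨x, hx, hxt⟩ | hb
        · have hxc : x = s c := by simpa [t] using hxt
          obtain ⟨a₁', h₁', hprod⟩ := cs.exists_sublist_wordProd_eq_mul_of_mem_rightInvSeq hx
          obtain ⟨χ, hχ, hχprod⟩ := ih hred (h₁'.trans h₁) hω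
          refine ⟨χ, hχ, ?_⟩
          rw [hχprod, wordProd_append, wordProd_cons, hprod, hxc, wordProd_append]
          simp [mul_assoc]
        · have hcb : cs.IsReduced (c :: b) := by simpa using hred.drop a.length
          exact ((nodup_cons.mp hcb.nodup_rightInvSeq).1 hb).elim
      · obtain ⟨χ, hχ, hχprod⟩ := ih hred h₁ hω
        have hinv : cs.IsRightInversion (π χ) t :=
          ⟨ht, by rwa [hχprod, ← hut, mul_assoc, ht.mul_self, mul_one]⟩
        obtain ⟨χ', hχ', hprod'⟩ := cs.exists_sublist_wordProd_eq_mul_of_isRightInversion hinv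
        exact ⟨χ', hχ'.trans hχ, by rw [hprod', hχprod, ← hut, mul_assoc, ht.mul_self, mul_one]⟩
    · obtain ⟨χ, hχ, hχprod⟩ := ih hred h₁ hω
      exact ⟨χ, hχ, by rw [hχprod, append_assoc, singleton_append]⟩

theorem isReduced_append_singleton {ω : List B} {i : B} (hω : cs.IsReduced ω)
    (h : ℓ (π ω * s i) = ℓ (π ω) + 1) : cs.IsReduced (ω ++ [i]) := by
  rw [IsReduced, wordProd_append, wordProd_singleton, h, hω.eq, length_append, length_singleton]

end CoxeterSystem

namespace BruhatLE

open List

variable {cs : CoxeterSystem M W} {u v w x : W} {i : B}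

local prefix:100 "s " => cs.simple
local prefix:100 "π " => cs.wordProd
local prefix:100 "ℓ " => cs.length

theorem of_sublist {ω χ : List B} (hω : cs.IsReduced ω) (hχ : χ <+ ω) :
    BruhatLE cs (π χ) (π ω) :=
  ⟨ω, hω, rfl, χ, hχ, rfl⟩

theorem exists_sublist (h : BruhatLE cs u w) {ω : List B} (hω : π ω = w) :
    ∃ χ, χ <+ ω ∧ π χ = u := by
  obtain ⟨l, hl, rfl, l', hl', rfl⟩ := h
  simpa using cs.exists_sublist_wordProd_eq_of_sublist (b := []) (by simpa using hl) hl'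
    (by simpa using hω)

theorem refl (w : W) : BruhatLE cs w w := by
  obtain ⟨ω, hω, rfl⟩ := cs.exists_isReduced w
  exact of_sublist hω (Sublist.refl ω)

theorem one_le (w : W) : BruhatLE cs 1 w := by
  obtain ⟨ω, hω, rfl⟩ := cs.exists_isReduced w
  simpa using of_sublist hω (nil_sublist ω)

theorem length_le (h : BruhatLE cs u w) : ℓ u ≤ ℓ w := by
  obtain ⟨l, hl, rfl, l', hl', rfl⟩ := h
  calc ℓ (π l') ≤ l'.length := cs.length_wordProd_le l'
    _ ≤ l.length := hl'.length_le
    _ = ℓ (π l) := hl.symm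

theorem eq_of_length_le (h : BruhatLE cs u w) (hlen : ℓ w ≤ ℓ u) : u = w := by
  obtain ⟨l, hl, rfl, l', hl', rfl⟩ := h
  have : l.length ≤ l'.length := by
    rw [← hl.eq]; exact hlen.trans (cs.length_wordProd_le l')
  rw [hl'.eq_of_length (le_antisymm hl'.length_le this)]

theorem antisymm (h₁ : BruhatLE cs u w) (h₂ : BruhatLE cs w u) : u = w :=
  h₁.eq_of_length_le h₂.length_le

theorem le_mul_simple (h : BruhatLE cs x v) (hv : ℓ (v * s i) = ℓ v + 1) :
    BruhatLE cs x (v * s i) := by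
  obtain ⟨l, hl, rfl, l', hl', rfl⟩ := h
  simpa [wordProd_append] using
    of_sublist (cs.isReduced_append_singleton hl hv) (hl'.trans (sublist_append_left l [i]))

theorem mul_simple (h : BruhatLE cs x v) (hv : ℓ (v * s i) = ℓ v + 1) :
    BruhatLE cs (x * s i) (v * s i) := by
  obtain ⟨l, hl, rfl, l', hl', rfl⟩ := h
  simpa [wordProd_append] using
    of_sublist (cs.isReduced_append_singleton hl hv) (hl'.append (Sublist.refl [i]))

theorem le_or_exists_mul_simple (h : BruhatLE cs x (v * s i)) :
    BruhatLE cs x v ∨ ∃ x', BruhatLE cs x' v ∧ x = x' * s i := by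
  obtain ⟨l, hl, rfl⟩ := cs.exists_isReduced v
  obtain ⟨χ, hχ, rfl⟩ := h.exists_sublist (ω := l ++ [i]) (by simp [wordProd_append])
  obtain ⟨χ₁, χ₂, rfl, h₁, h₂⟩ := sublist_append_iff.mp hχ
  rcases sublist_singleton.mp h₂ with rfl | rfl
  · exact .inl (by simpa using of_sublist hl h₁)
  · exact .inr ⟨_, of_sublist hl h₁, by simp [wordProd_append]⟩

theorem le_or_exists_simple_mul (h : BruhatLE cs x (s i * v)) :
    BruhatLE cs x v ∨ ∃ x', BruhatLE cs x' v ∧ x = s i * x' := by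
  obtain ⟨l, hl, rfl⟩ := cs.exists_isReduced v
  obtain ⟨χ, hχ, rfl⟩ := h.exists_sublist (cs.wordProd_cons i l)
  rcases sublist_cons_iff.mp hχ with h₁ | ⟨χ', rfl, h₁⟩
  · exact .inl (of_sublist hl h₁)
  · exact .inr ⟨_, of_sublist hl h₁, cs.wordProd_cons i χ'⟩

end BruhatLE

namespace IsDemazureProd

variable {cs : CoxeterSystem M W} {w m : W} {i : B}

local prefix:100 "s " => cs.simple
local prefix:100 "ℓ " => cs.length

theorem eq_simple_mul (h : IsDemazureProd cs (s i) w m) (hw : ℓ (s i * w) = ℓ w + 1) :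
    m = s i * w := by
  have hle := h.2 _ _ (BruhatLE.refl (s i)) (BruhatLE.refl w)
  obtain ⟨x, q, hx, hq, rfl⟩ := h.1
  refine (hle.eq_of_length_le ?_).symm
  calc ℓ (x * q) ≤ ℓ x + ℓ q := cs.length_mul_le x q
    _ ≤ 1 + ℓ w := add_le_add (hx.length_le.trans_eq (cs.length_simple i)) hq.length_le
    _ = ℓ (s i * w) := by omega

theorem eq_of_length_simple_mul_lt (h : IsDemazureProd cs (s i) w m) (hw : ℓ (s i * w) + 1 = ℓ w) :
    m = w := by
  have hle : BruhatLE cs w m := by simpa using h.2 1 w (BruhatLE.one_le _) (BruhatLE.refl w)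
  obtain ⟨x, q, hx, hq, rfl⟩ := h.1
  refine (hle.eq_of_length_le (not_lt.mp fun hlt => ?_)).symm
  have hx₁ := hx.length_le
  have hq₁ := hq.length_le
  have := cs.length_mul_le x q
  rw [cs.length_simple] at hx₁
  have hxs : x = s i := hx.eq_of_length_le (by rw [cs.length_simple]; omega)
  have hqw : q = w := hq.eq_of_length_le (by omega)
  rw [hxs, hqw] at hlt
  omega

end IsDemazureProd

/-- if `v = v′s` with `s` simple and `v′ < v` in Bruhat order, then
`v ∗ w = v′ ∗ (s ∗ w)` for all `w`. -/
theorem statement2 (cs : CoxeterSystem M W) (i : B) (v v' w m₁ m₂ m₃ : W)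
    (hv : v = v' * cs.simple i)
    (hlt : BruhatLE cs v' v ∧ v' ≠ v)
    (h₁ : IsDemazureProd cs v w m₁)
    (h₂ : IsDemazureProd cs (cs.simple i) w m₂)
    (h₃ : IsDemazureProd cs v' m₂ m₃) :
    m₁ = m₃ := by
  subst hv
  have hup : cs.length (v' * cs.simple i) = cs.length v' + 1 := by
    have := hlt.1.length_le
    rcases cs.length_mul_simple v' i with h | h <;> omega
  apply BruhatLE.antisymm
  · obtain ⟨x, q, hx, hq, rfl⟩ := h₁.1
    rcases hx.le_or_exists_mul_simple with hx | ⟨x', hx', rfl⟩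
    · simpa using h₃.2 x q hx (by simpa using h₂.2 1 q (BruhatLE.one_le _) hq)
    · rw [mul_assoc]
      exact h₃.2 x' _ hx' (h₂.2 _ q (BruhatLE.refl _) hq)
  · obtain ⟨a, b, ha, hb, rfl⟩ := h₃.1
    rcases cs.length_simple_mul w i with hw | hw
    · rw [h₂.eq_simple_mul hw] at hb
      rcases hb.le_or_exists_simple_mul with hb | ⟨b', hb', rfl⟩
      · exact h₁.2 a b (ha.le_mul_simple hup) hb
      · rw [← mul_assoc]
        exact h₁.2 _ b' (ha.mul_simple hup) hb'
    · rw [h₂.eq_of_length_simple_mul_lt hw] at hb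
      exact h₁.2 a b (ha.le_mul_simple hup) hb
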